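/- arXiv:2502.15195 — 2 statements merged into one kernel-verified Lean document; each statement's English description precedes it below -/
import Mathlib

section
/- Let p be a point lying on both circles S_{x_1,r_1} and S_{x_2,r_2} with distinct centers x_1 ≠ x_2. The tangent lines of the two circles at p coincide (equivalently, the sum of the tangent spaces at p is not all of ℝ²) if and only if p lies on the line through x_1 and x_2. -/
/-!
The tangent line of a circle at `p` is the orthogonal complement of the radius direction,
so the two tangent lines coincide iff the radii `p - x₁` and `p - x₂` span the same line.
Since `(p - x₁) - (p - x₂) = x₂ - x₁ ≠ 0`, this happens iff `p - x₁` is parallel to `x₂ - x₁`.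
-/

open Submodule

theorem Submodule.orthogonal_inj {𝕜 E : Type*} [RCLike 𝕜] [NormedAddCommGroup E]
    [InnerProductSpace 𝕜 E] {K₁ K₂ : Submodule 𝕜 E} [K₁.HasOrthogonalProjection]
    [K₂.HasOrthogonalProjection] : K₁ᗮ = K₂ᗮ ↔ K₁ = K₂ :=
  ⟨fun h ↦ by rw [← K₁.orthogonal_orthogonal, h, K₂.orthogonal_orthogonal], congrArg _⟩

theorem setOf_inner_eq_zero_eq_orthogonal {E : Type*} [NormedAddCommGroup E]
    [InnerProductSpace ℝ E] (a : E) :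
    {v : E | inner ℝ v a = 0} = ((ℝ ∙ a)ᗮ : Set E) := by
  ext v
  exact mem_orthogonal_singleton_iff_inner_left.symm

theorem span_sub_eq_span_sub_iff_exists_eq_add_smul {K E : Type*} [Field K] [AddCommGroup E]
    [Module K E] {x₁ x₂ p : E} (h₁ : p ≠ x₁) (h₂ : p ≠ x₂) (hx : x₁ ≠ x₂) :
    (K ∙ (p - x₁)) = (K ∙ (p - x₂)) ↔ ∃ t : K, p = x₁ + t • (x₂ - x₁) := by
  rw [span_singleton_eq_span_singleton]
  constructor
  · rintro ⟨z, hz⟩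
    have hdiff : x₂ - x₁ = (1 - (z : K)) • (p - x₁) := by
      rw [sub_smul, one_smul, ← Units.smul_def, hz]
      abel
    have hz₁ : 1 - (z : K) ≠ 0 := by
      intro h
      rw [h, zero_smul, sub_eq_zero] at hdiff
      exact hx hdiff.symm
    refine ⟨(1 - (z : K))⁻¹, ?_⟩
    rw [hdiff, smul_smul, inv_mul_cancel₀ hz₁, one_smul, add_sub_cancel]
  · rintro ⟨t, rfl⟩
    have ht₀ : t ≠ 0 := by rintro rfl; simp at h₁
    have ht₁ : t - 1 ≠ 0 := by rw [sub_ne_zero]; rintro rfl; simp at h₂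
    refine ⟨Units.mk0 ((t - 1) / t) (div_ne_zero ht₁ ht₀), ?_⟩
    rw [Units.smul_mk0, add_sub_cancel_left, smul_smul, div_mul_cancel₀ _ ht₀, sub_smul, one_smul]
    abel

/-- For a point `p` on two circles with distinct centers, the tangent lines at `p` coincide
iff `p` lies on the line through the centers. -/
theorem tangent_lines_coincide_iff_on_line_of_centers
    (x₁ x₂ p : EuclideanSpace ℝ (Fin 2)) (r₁ r₂ : ℝ) (hr₁ : 0 < r₁) (hr₂ : 0 < r₂)
    (hp₁ : ‖p - x₁‖ = r₁) (hp₂ : ‖p - x₂‖ = r₂) (hx : x₁ ≠ x₂) :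
    {v : EuclideanSpace ℝ (Fin 2) | (inner ℝ v (p - x₁) : ℝ) = 0}
        = {v : EuclideanSpace ℝ (Fin 2) | (inner ℝ v (p - x₂) : ℝ) = 0}
      ↔ ∃ t : ℝ, p = x₁ + t • (x₂ - x₁) := by
  have h₁ : p ≠ x₁ := sub_ne_zero.mp (norm_pos_iff.mp (hp₁ ▸ hr₁))
  have h₂ : p ≠ x₂ := sub_ne_zero.mp (norm_pos_iff.mp (hp₂ ▸ hr₂))
  rw [setOf_inner_eq_zero_eq_orthogonal, setOf_inner_eq_zero_eq_orthogonal, SetLike.coe_set_eq,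
    orthogonal_inj, span_sub_eq_span_sub_iff_exists_eq_add_smul h₁ h₂ hx]
end

section
/- Let S_{x_1,r_1} and S_{x_2,r_2} be two circles intersecting transversally at a point p (the vectors p - x_1, p - x_2 linearly independent). Then for every ε > 0 there exists a point q with ‖q - p‖ < ε such that q lies in the open disk of one circle and outside the closed disk of the other; i.e., p is in the closure of {x : ‖x - x_1‖ < r_1 and ‖x - x_2‖ > r_2}. -/
set_option maxHeartbeats 800000

open RealInnerProductSpace

/-- Near a transversal intersection point of two circles, there are points arbitrarily
close lying inside the open disk of the first circle and outside the closed disk of the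
second. -/
theorem transversal_point_mem_closure_mixed_region
    (x₁ x₂ p : EuclideanSpace ℝ (Fin 2)) (r₁ r₂ : ℝ) (hr₁ : 0 < r₁) (hr₂ : 0 < r₂)
    (hp₁ : ‖p - x₁‖ = r₁) (hp₂ : ‖p - x₂‖ = r₂)
    (htrans : LinearIndependent ℝ ![p - x₁, p - x₂]) :
    p ∈ closure {x : EuclideanSpace ℝ (Fin 2) | ‖x - x₁‖ < r₁ ∧ r₂ < ‖x - x₂‖} := by
  set u₁ := p - x₁ with hu₁
  set u₂ := p - x₂ with hu₂
  have hpair := LinearIndependent.pair_iff.mp htrans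
  have hu₁0 : u₁ ≠ 0 := by
    intro h
    have := hpair 1 0 (by simp [h])
    simpa using this.1
  have hu₂0 : u₂ ≠ 0 := by
    intro h
    have := hpair 0 1 (by simp [h])
    simpa using this.2
  -- strict Cauchy-Schwarz
  have hcs : ⟪u₁, u₂⟫ * ⟪u₁, u₂⟫ < (‖u₁‖ * ‖u₁‖) * (‖u₂‖ * ‖u₂‖) := by
    have h1 : ⟪u₁, u₂⟫ < ‖u₁‖ * ‖u₂‖ := by
      rw [inner_lt_norm_mul_iff_real]
      intro h
      have := hpair ‖u₂‖ (-‖u₁‖) (by rw [neg_smul, ← h]; abel)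
      exact hu₂0 (norm_eq_zero.mp this.1)
    have h2 : -(‖u₁‖ * ‖u₂‖) < ⟪u₁, u₂⟫ := by
      have : ⟪u₁, -u₂⟫ < ‖u₁‖ * ‖-u₂‖ := by
        rw [inner_lt_norm_mul_iff_real]
        intro h
        have := hpair ‖-u₂‖ ‖u₁‖ (by
          have : ‖-u₂‖ • u₁ = -(‖u₁‖ • u₂) := by rw [h]; simp [smul_neg]
          rw [this]; abel)
        exact hu₁0 (norm_eq_zero.mp this.2)
      rw [inner_neg_right, norm_neg] at this
      linarith
    nlinarith [norm_nonneg u₁, norm_nonneg u₂]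
  set a : ℝ := ⟪u₁, u₂⟫ with ha
  set d : ℝ := ‖u₁‖ * ‖u₁‖ * (‖u₂‖ * ‖u₂‖) - a * a with hd
  have hdpos : 0 < d := by simp only [hd]; nlinarith
  set v : EuclideanSpace ℝ (Fin 2) :=
    ((-(‖u₂‖ * ‖u₂‖) - a) / d) • u₁ + ((a + ‖u₁‖ * ‖u₁‖) / d) • u₂ with hv
  have hinner1 : ⟪u₁, v⟫ = -1 := by
    simp only [hv, inner_add_right, real_inner_smul_right, real_inner_self_eq_norm_mul_norm,
      ← ha]
    field_simp
    ring
  have ha' : ⟪u₂, u₁⟫ = a := by rw [ha, real_inner_comm]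
  have hinner2 : ⟪u₂, v⟫ = 1 := by
    simp only [hv, inner_add_right, real_inner_smul_right, real_inner_self_eq_norm_mul_norm, ha']
    field_simp
    ring
  rw [Metric.mem_closure_iff]
  intro ε hε
  set t : ℝ := min (1 / (‖v‖ ^ 2 + 1)) (ε / (2 * (‖v‖ + 1))) with ht
  have hvpos : (0:ℝ) < ‖v‖ ^ 2 + 1 := by positivity
  have hvpos2 : (0:ℝ) < ‖v‖ + 1 := by positivity
  have htpos : 0 < t := lt_min (by positivity) (by positivity)
  refine ⟨p + t • v, ⟨?_, ?_⟩, ?_⟩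
  · -- inside first open disk
    have hexp : ‖p + t • v - x₁‖ ^ 2 = r₁ ^ 2 - 2 * t + t ^ 2 * ‖v‖ ^ 2 := by
      have : p + t • v - x₁ = u₁ + t • v := by rw [hu₁]; abel
      rw [this, norm_add_sq_real, real_inner_smul_right, hinner1, norm_smul, hp₁]
      simp [mul_pow, abs_of_pos htpos]
      ring
    have ht1 : t * ‖v‖ ^ 2 < 1 := by
      have : t ≤ 1 / (‖v‖ ^ 2 + 1) := min_le_left _ _
      calc t * ‖v‖ ^ 2 ≤ (1 / (‖v‖ ^ 2 + 1)) * ‖v‖ ^ 2 := by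
            apply mul_le_mul_of_nonneg_right this (by positivity)
        _ < 1 := by rw [div_mul_eq_mul_div, div_lt_one hvpos]; nlinarith [sq_nonneg ‖v‖]
    have hlt : ‖p + t • v - x₁‖ ^ 2 < r₁ ^ 2 := by
      rw [hexp]; nlinarith
    exact lt_of_pow_lt_pow_left₀ 2 hr₁.le hlt
  · -- outside second closed disk
    have hexp : ‖p + t • v - x₂‖ ^ 2 = r₂ ^ 2 + 2 * t + t ^ 2 * ‖v‖ ^ 2 := by
      have : p + t • v - x₂ = u₂ + t • v := by rw [hu₂]; abel
      rw [this, norm_add_sq_real, real_inner_smul_right, hinner2, norm_smul, hp₂]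
      simp [mul_pow, abs_of_pos htpos]
      try ring
    have hlt : r₂ ^ 2 < ‖p + t • v - x₂‖ ^ 2 := by
      rw [hexp]; nlinarith [sq_nonneg (t * ‖v‖)]
    exact lt_of_pow_lt_pow_left₀ 2 (norm_nonneg _) hlt
  · -- close to p
    have hsub : p - (p + t • v) = -(t • v) := by abel
    have : dist p (p + t • v) = t * ‖v‖ := by
      rw [dist_eq_norm, hsub, norm_neg, norm_smul, Real.norm_eq_abs, abs_of_pos htpos]
    rw [this]
    have ht2 : t ≤ ε / (2 * (‖v‖ + 1)) := min_le_right _ _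
    calc t * ‖v‖ ≤ (ε / (2 * (‖v‖ + 1))) * ‖v‖ :=
          mul_le_mul_of_nonneg_right ht2 (norm_nonneg _)
      _ < ε := by
          rw [div_mul_eq_mul_div, div_lt_iff₀ (by positivity)]
          nlinarith [norm_nonneg v]
end
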